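/- Let φ be a BD△ formula in which every occurrence of every propositional variable lies within the scope of some △. Then in every BD△ model, for every world w, exactly one of the following holds: (w ⊨⁺ φ and w ⊭⁻ φ), or (w ⊭⁺ φ and w ⊨⁻ φ). -/

import Mathlib

inductive BDForm : Type
  | var : ℕ → BDForm
  | neg : BDForm → BDForm
  | and : BDForm → BDForm → BDForm
  | or : BDForm → BDForm → BDForm
  | delta : BDForm → BDForm
deriving DecidableEq

structure BDModel where
  W : Type
  vp : ℕ → W → Prop
  vm : ℕ → W → Prop

def BDModel.sat (M : BDModel) : Bool → BDForm → M.W → Prop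
  | true, .var p, w => M.vp p w
  | false, .var p, w => M.vm p w
  | b, .neg φ, w => M.sat (!b) φ w
  | true, .and φ ψ, w => M.sat true φ w ∧ M.sat true ψ w
  | false, .and φ ψ, w => M.sat false φ w ∨ M.sat false ψ w
  | true, .or φ ψ, w => M.sat true φ w ∨ M.sat true ψ w
  | false, .or φ ψ, w => M.sat false φ w ∧ M.sat false ψ w
  | true, .delta φ, w => M.sat true φ w
  | false, .delta φ, w => ¬ M.sat true φ w

/-- BD△ entailment: positive extension inclusion and reverse negative inclusion, in every model. -/
def Entails (φ χ : BDForm) : Prop :=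
  ∀ (M : BDModel) (w : M.W),
    (M.sat true φ w → M.sat true χ w) ∧ (M.sat false χ w → M.sat false φ w)

/-- the value-detecting formulas -/
def tF (φ : BDForm) : BDForm := (φ.delta).and ((φ.neg.delta).neg)
def bF (φ : BDForm) : BDForm := (φ.delta).and (φ.neg.delta)
def nF (φ : BDForm) : BDForm := ((φ.delta).neg).and ((φ.neg.delta).neg)
def fF (φ : BDForm) : BDForm := ((φ.delta).neg).and (φ.neg.delta)

def topF : BDForm := ((BDForm.var 0).delta).or (((BDForm.var 0).delta).neg)
def botF : BDForm := topF.neg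

/-- every occurrence of every variable is within the scope of some △ -/
def guarded : BDForm → Prop
  | .var _ => False
  | .neg φ => guarded φ
  | .and φ χ => guarded φ ∧ guarded χ
  | .or φ χ => guarded φ ∧ guarded χ
  | .delta _ => True

namespace BDModel

variable (M : BDModel) (w : M.W)

/-- Under `△` the negative value is the complement of the positive one, and `¬`, `∧`, `∨`
preserve this by the De Morgan laws. -/
theorem sat_false_iff_not_sat_true_of_guarded {φ : BDForm} (h : guarded φ) :
    M.sat false φ w ↔ ¬ M.sat true φ w := by
  induction φ with
  | var _ => exact h.elim
  | neg φ ih => exact iff_not_comm.mp (ih h)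
  | and φ χ ihφ ihχ =>
    simp only [sat]
    rw [ihφ h.1, ihχ h.2, not_and_or]
  | or φ χ ihφ ihχ =>
    simp only [sat]
    rw [ihφ h.1, ihχ h.2, not_or]
  | delta _ => exact Iff.rfl

end BDModel

/-- if every variable occurrence of φ is under △, then at every world
exactly one of (⊨⁺φ and ⊭⁻φ), (⊭⁺φ and ⊨⁻φ) holds. -/
theorem stmt3 (φ : BDForm) (h : guarded φ) (M : BDModel) (w : M.W) :
    Xor' (M.sat true φ w ∧ ¬ M.sat false φ w) (¬ M.sat true φ w ∧ M.sat false φ w) := by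
  rw [M.sat_false_iff_not_sat_true_of_guarded w h, not_not, and_self, and_self]
  exact xor_not_right.mpr Iff.rfl
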